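/- arXiv:1505.02456 — 2 statements merged into one kernel-verified Lean document; each statement's English description precedes it below -/
import Mathlib

section
/- If W is the symmetric edge matrix (with unit diagonal) of an undirected graph on d nodes, then (d+1)I − W is invertible with nonnegative inverse, and In[((d+1)I − W)⁻¹] has (i,j) entry 1 if and only if nodes i and j are in the same connected component of the graph. -/
/-!
Write `(d+1)I − W = (d+1)(I − T)` with `T = W/(d+1)`. Every row of `W` sums to at most `d`, so
`‖T‖_∞ < 1` and the Neumann series gives `((d+1)I − W)⁻¹ = ∑ₖ (d+1)^{-(k+1)} Wᵏ`, a convergent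
series of entrywise nonnegative matrices. Its `(i, j)` entry is therefore positive iff
`(Wᵏ)ᵢⱼ > 0` for some `k`, i.e. iff some walk in the graph leads from `i` to `j`.
-/

open Relation
open scoped Matrix.Norms.Operator

theorem HasSum.pos_iff_exists_pos {ι α : Type*} [AddCommGroup α] [LinearOrder α]
    [IsOrderedAddMonoid α] [TopologicalSpace α] [IsTopologicalAddGroup α] [OrderClosedTopology α]
    {f : ι → α} {a : α} (hf : HasSum f a) (h0 : ∀ i, 0 ≤ f i) : 0 < a ↔ ∃ i, 0 < f i := by
  refine ⟨fun ha => ?_, fun ⟨i, hi⟩ => hasSum_lt h0 hi hasSum_zero hf⟩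
  by_contra! hle
  have hzero : f = 0 := funext fun i => (hle i).antisymm (h0 i)
  exact ha.ne' (hf.unique (hzero ▸ hasSum_zero))

theorem norm_inv_smul_lt_one_of_norm_lt {𝕜 E : Type*} [NormedDivisionRing 𝕜]
    [SeminormedAddCommGroup E] [Module 𝕜 E] [NormSMulClass 𝕜 E] {x : E} {r : 𝕜}
    (h : ‖x‖ < ‖r‖) : ‖r⁻¹ • x‖ < 1 := by
  have hr : 0 < ‖r‖ := (norm_nonneg x).trans_lt h
  rwa [norm_smul, norm_inv, inv_mul_lt_one₀ hr]

namespace Matrix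

variable {n : Type*} [Fintype n]

theorem linfty_opNorm_le_card_mul {m 𝕜 : Type*} [Fintype m] [SeminormedAddCommGroup 𝕜]
    {A : Matrix m n 𝕜} {c : ℝ} (hc : 0 ≤ c) (h : ∀ i j, ‖A i j‖ ≤ c) :
    ‖A‖ ≤ Fintype.card n * c := by
  lift c to NNReal using hc
  rw [linfty_opNorm_def]
  norm_cast
  refine Finset.sup_le fun i _ => ?_
  calc ∑ j, ‖A i j‖₊ ≤ ∑ _j : n, c := Finset.sum_le_sum fun j _ => h i j
    _ = Fintype.card n * c := by simp

variable [DecidableEq n]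

section Positive

variable {R : Type*} [Semiring R] [LinearOrder R] [IsStrictOrderedRing R] {W : Matrix n n R}

theorem reflTransGen_of_pow_apply_pos (hW : ∀ i j, 0 ≤ W i j) {k : ℕ} {i j : n}
    (h : 0 < (W ^ k) i j) : ReflTransGen (fun p q => 0 < W p q) i j := by
  induction k generalizing j with
  | zero =>
    obtain rfl : i = j := by by_contra hij; simp [hij] at h
    exact ReflTransGen.refl
  | succ k ih =>
    rw [pow_succ, mul_apply] at h
    obtain ⟨l, -, hl⟩ := (Finset.sum_pos_iff_of_nonneg fun l _ =>
      mul_nonneg (pow_apply_nonneg hW k i l) (hW l j)).mp h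
    exact (ih (pos_of_mul_pos_left hl (hW l j))).tail
      (pos_of_mul_pos_right hl (pow_apply_nonneg hW k i l))

theorem exists_pow_apply_pos_of_reflTransGen (hW : ∀ i j, 0 ≤ W i j) {i j : n}
    (h : ReflTransGen (fun p q => 0 < W p q) i j) : ∃ k, 0 < (W ^ k) i j := by
  induction h with
  | refl => exact ⟨0, by simp⟩
  | @tail l j _ hlj ih =>
    obtain ⟨k, hk⟩ := ih
    refine ⟨k + 1, ?_⟩
    rw [pow_succ, mul_apply]
    exact (mul_pos hk hlj).trans_le <| Finset.single_le_sum
      (fun m _ => mul_nonneg (pow_apply_nonneg hW k i m) (hW m j)) (Finset.mem_univ l)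

theorem exists_pow_apply_pos_iff_reflTransGen (hW : ∀ i j, 0 ≤ W i j) {i j : n} :
    (∃ k, 0 < (W ^ k) i j) ↔ ReflTransGen (fun p q => 0 < W p q) i j :=
  ⟨fun ⟨_, h⟩ => reflTransGen_of_pow_apply_pos hW h, exists_pow_apply_pos_of_reflTransGen hW⟩

end Positive

section Neumann

variable {𝕜 : Type*} [RCLike 𝕜] {W : Matrix n n 𝕜} {r : 𝕜}

theorem smul_one_sub_mul_smul_tsum_eq_one (h : ‖W‖ < ‖r‖) :
    (r • 1 - W) * (r⁻¹ • ∑' k, (r⁻¹ • W) ^ k) = 1 := by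
  have hr : r ≠ 0 := norm_pos_iff.mp ((norm_nonneg W).trans_lt h)
  have hfac : r • 1 - W = r • (1 - r⁻¹ • W) := by
    rw [smul_sub, smul_smul, mul_inv_cancel₀ hr, one_smul]
  rw [hfac, smul_mul_smul_comm, mul_inv_cancel₀ hr, one_smul]
  exact mul_neg_geom_series _ (norm_inv_smul_lt_one_of_norm_lt h)

theorem isUnit_smul_one_sub (h : ‖W‖ < ‖r‖) : IsUnit (r • 1 - W) :=
  .of_mul_eq_one _ (smul_one_sub_mul_smul_tsum_eq_one h)

theorem hasSum_inv_smul_one_sub (h : ‖W‖ < ‖r‖) :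
    HasSum (fun k => r⁻¹ ^ (k + 1) • W ^ k) (r • 1 - W)⁻¹ := by
  rw [inv_eq_right_inv (smul_one_sub_mul_smul_tsum_eq_one h)]
  have hs : Summable fun k => (r⁻¹ • W) ^ k :=
    summable_geometric_of_norm_lt_one (norm_inv_smul_lt_one_of_norm_lt h)
  simpa only [smul_pow, smul_smul, ← pow_succ'] using hs.hasSum.const_smul r⁻¹

theorem hasSum_inv_smul_one_sub_apply (h : ‖W‖ < ‖r‖) (i j : n) :
    HasSum (fun k => r⁻¹ ^ (k + 1) * (W ^ k) i j) ((r • 1 - W)⁻¹ i j) := by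
  have hs := hasSum_inv_smul_one_sub h
  exact Pi.hasSum.mp (Pi.hasSum.mp hs i) j

end Neumann

section MMatrix

variable {W : Matrix n n ℝ} {r : ℝ} (hW : ∀ i j, 0 ≤ W i j) (h : ‖W‖ < r)
include hW h

theorem inv_smul_one_sub_apply_nonneg (i j : n) : 0 ≤ (r • 1 - W)⁻¹ i j := by
  have hr : 0 < r := (norm_nonneg W).trans_lt h
  exact (hasSum_inv_smul_one_sub_apply (h.trans_le r.le_norm_self) i j).nonneg fun k =>
    mul_nonneg (by positivity) (pow_apply_nonneg hW k i j)

theorem inv_smul_one_sub_apply_pos_iff (i j : n) :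
    0 < (r • 1 - W)⁻¹ i j ↔ ReflTransGen (fun p q => 0 < W p q) i j := by
  have hr : 0 < r := (norm_nonneg W).trans_lt h
  have hsum := hasSum_inv_smul_one_sub_apply (h.trans_le r.le_norm_self) i j
  rw [hsum.pos_iff_exists_pos fun k => mul_nonneg (by positivity) (pow_apply_nonneg hW k i j)]
  simp only [mul_pos_iff_of_pos_left (pow_pos (inv_pos.mpr hr) _)]
  exact exists_pow_apply_pos_iff_reflTransGen hW

end MMatrix

end Matrix

theorem m_matrix_connected_components_general {d : ℕ} (W : Matrix (Fin d) (Fin d) ℝ)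
    (hbin : ∀ i j, W i j = 0 ∨ W i j = 1) :
    IsUnit (((d : ℝ) + 1) • (1 : Matrix (Fin d) (Fin d) ℝ) - W) ∧
      (∀ i j, 0 ≤ (((d : ℝ) + 1) • (1 : Matrix (Fin d) (Fin d) ℝ) - W)⁻¹ i j) ∧
      (∀ i j, 0 < (((d : ℝ) + 1) • (1 : Matrix (Fin d) (Fin d) ℝ) - W)⁻¹ i j ↔
        Relation.ReflTransGen (fun p q => W p q = 1) i j) := by
  have hW : ∀ i j, 0 ≤ W i j := fun i j => by rcases hbin i j with h | h <;> simp [h]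
  have hnorm : ‖W‖ < (d : ℝ) + 1 :=
    calc ‖W‖ ≤ Fintype.card (Fin d) * 1 :=
          Matrix.linfty_opNorm_le_card_mul zero_le_one fun i j => by
            rcases hbin i j with h | h <;> simp [h]
      _ < d + 1 := by simp
  have hadj : (fun p q => 0 < W p q) = fun p q => W p q = 1 := by
    ext p q
    rcases hbin p q with h | h <;> simp [h]
  refine ⟨Matrix.isUnit_smul_one_sub (hnorm.trans_le (Real.le_norm_self _)),
    Matrix.inv_smul_one_sub_apply_nonneg hW hnorm, fun i j => ?_⟩
  rw [Matrix.inv_smul_one_sub_apply_pos_iff hW hnorm, hadj]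

/-- For the symmetric edge matrix `W` (unit diagonal) of an undirected graph on
`d` nodes, `(d+1)I − W` is invertible with nonnegative inverse, and the
indicator `In[((d+1)I − W)⁻¹]` has `(i,j)` entry `1` (equivalently, the
`(i,j)` entry of the inverse is positive) iff `i` and `j` lie in the same
connected component of the graph. -/
theorem m_matrix_connected_components {d : ℕ} (W : Matrix (Fin d) (Fin d) ℝ)
    (hsym : ∀ i j, W i j = W j i)
    (hdiag : ∀ i, W i i = 1)
    (hbin : ∀ i j, W i j = 0 ∨ W i j = 1) :
    IsUnit (((d : ℝ) + 1) • (1 : Matrix (Fin d) (Fin d) ℝ) - W) ∧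
      (∀ i j, 0 ≤ (((d : ℝ) + 1) • (1 : Matrix (Fin d) (Fin d) ℝ) - W)⁻¹ i j) ∧
      (∀ i j, 0 < (((d : ℝ) + 1) • (1 : Matrix (Fin d) (Fin d) ℝ) - W)⁻¹ i j ↔
        Relation.ReflTransGen (fun p q => W p q = 1) i j) :=
  m_matrix_connected_components_general W hbin
end

section
/- Partial closure is idempotent and commutative: for a reflexive 0-1 edge matrix 𝓜 and indices k, l, zer_{\{k\}}(zer_{\{k\}} 𝓜) = zer_{\{k\}} 𝓜 and zer_{\{k\}}(zer_{\{l\}} 𝓜) = zer_{\{l\}}(zer_{\{k\}} 𝓜). -/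
/-- Partial closure at a single index `k` of a reflexive 0-1 edge matrix:
entries in row or column `k` are unchanged; any other entry `(i,j)` becomes
`In[M_{ij} + M_{ik} M_{kj}]`. -/
def zer {d : ℕ} (k : Fin d) (M : Matrix (Fin d) (Fin d) ℕ) :
    Matrix (Fin d) (Fin d) ℕ :=
  Matrix.of fun i j =>
    if i = k ∨ j = k then M i j
    else if 0 < M i j + M i k * M k j then 1 else 0

/-! A 0-1 matrix is the indicator matrix of a relation `r`, and `zer k` acts on it as the
partial closure of `r` through `k`: both laws then hold already at the level of relations,
since a path `i → k → l → j` created in one order is created in the other order too. -/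

section PartialClosure

variable {α : Type*}

def partialClosure (k : α) (r : α → α → Prop) : α → α → Prop :=
  fun i j => r i j ∨ r i k ∧ r k j

theorem partialClosure_idem (k : α) (r : α → α → Prop) :
    partialClosure k (partialClosure k r) = partialClosure k r := by
  funext i j
  simp only [partialClosure, eq_iff_iff]
  tauto

theorem partialClosure_comm (k l : α) (r : α → α → Prop) :
    partialClosure k (partialClosure l r) = partialClosure l (partialClosure k r) := by
  funext i j
  simp only [partialClosure, eq_iff_iff]
  tauto

end PartialClosure

open Classical in
noncomputable def relMatrix {d : ℕ} (r : Fin d → Fin d → Prop) : Matrix (Fin d) (Fin d) ℕ :=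
  Matrix.of fun i j => if r i j then 1 else 0

theorem eq_relMatrix_of_zero_or_one {d : ℕ} {M : Matrix (Fin d) (Fin d) ℕ}
    (hbin : ∀ i j, M i j = 0 ∨ M i j = 1) : M = relMatrix fun i j => M i j = 1 := by
  ext i j
  rcases hbin i j with h | h <;> simp [relMatrix, h]

theorem zer_relMatrix {d : ℕ} (k : Fin d) (r : Fin d → Fin d → Prop) :
    zer k (relMatrix r) = relMatrix (partialClosure k r) := by
  ext i j
  simp only [zer, relMatrix, partialClosure, Matrix.of_apply]
  rcases eq_or_ne i k with rfl | hi
  · by_cases r i j <;> simp_all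
  rcases eq_or_ne j k with rfl | hj
  · by_cases r i j <;> simp_all
  split_ifs <;> simp_all

theorem zer_idem_and_comm_general {d : ℕ} (M : Matrix (Fin d) (Fin d) ℕ)
    (hbin : ∀ i j, M i j = 0 ∨ M i j = 1)
    (k l : Fin d) :
    zer k (zer k M) = zer k M ∧ zer k (zer l M) = zer l (zer k M) := by
  rw [eq_relMatrix_of_zero_or_one hbin]
  simp only [zer_relMatrix, partialClosure_idem, partialClosure_comm k l, and_self]

/-- Partial closure is idempotent and commutative: for a reflexive 0-1 edge
matrix `M` and indices `k`, `l`, `zer_{k}(zer_{k} M) = zer_{k} M` and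
`zer_{k}(zer_{l} M) = zer_{l}(zer_{k} M)`. -/
theorem zer_idem_and_comm {d : ℕ} (M : Matrix (Fin d) (Fin d) ℕ)
    (hdiag : ∀ i, M i i = 1) (hbin : ∀ i j, M i j = 0 ∨ M i j = 1)
    (k l : Fin d) :
    zer k (zer k M) = zer k M ∧ zer k (zer l M) = zer l (zer k M) :=
  zer_idem_and_comm_general M hbin k l
end
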